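/- arXiv:2410.01483 — 8 statements merged into one kernel-verified Lean document; each statement's English description precedes it below -/
import Mathlib

section
/- Let d, L ≥ 1 and let (W_l^A)_{l=1}^L, (W_l^B)_{l=1}^L and (W_l^*)_{l=1}^L be families of real d×d matrices such that for every layer l at least one of W_l^A, W_l^B is invertible. Then there exist matrices M_l ∈ ℝ^{d×2d} (for l = 1,…,L) and U_l ∈ ℝ^{2d×d} (for l = 0,…,L−1), with U_0 equal to the vertical stack [I; I] of two d×d identity matrices, such that for every l ∈ {1,…,L} the folded weight satisfies M_l · blockDiag(W_l^A, W_l^B) · U_{l−1} = W_l^*. Consequently, the merged ReLU MLP whose l-th weight matrix is this folded weight computes exactly the same function ℝ^d → ℝ^d as the target ReLU MLP with weights (W_l^*). -/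
/-- Entrywise ReLU on vectors. -/
noncomputable def reluV {d : ℕ} (v : Fin d → ℝ) : Fin d → ℝ := fun i => max (v i) 0

/-- A bias-free ReLU MLP: `mlp W l x` is the post-activation feature `f_l` of depth-`l`
prefix of the network with layer weights `W 1, …, W l`, on input `x` (`f_0 = x`). -/
noncomputable def mlp {d : ℕ} (W : ℕ → Matrix (Fin d) (Fin d) ℝ) : ℕ → (Fin d → ℝ) → (Fin d → ℝ)
  | 0 => fun x => x
  | l + 1 => fun x => reluV ((W (l + 1)).mulVec (mlp W l x))

/-- MLPs with weights agreeing on layers 1..L compute the same function up to depth L. -/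
lemma mlp_congr {d : ℕ} (W W' : ℕ → Matrix (Fin d) (Fin d) ℝ) (L : ℕ)
    (h : ∀ l, 1 ≤ l → l ≤ L → W l = W' l) (x : Fin d → ℝ) :
    mlp W L x = mlp W' L x := by
  induction L with
  | zero => rfl
  | succ n ih =>
    simp only [mlp]
    rw [ih (fun l h1 h2 => h l h1 (h2.trans (Nat.le_succ n))),
      h (n+1) (Nat.succ_le_succ (Nat.zero_le n)) le_rfl]

theorem fs_merge_reconstructs_any_target_mlp
    (d L : ℕ) (hd : 1 ≤ d) (hL : 1 ≤ L)
    (WA WB Wt : ℕ → Matrix (Fin d) (Fin d) ℝ)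
    (hinv : ∀ l, 1 ≤ l → l ≤ L → IsUnit (WA l) ∨ IsUnit (WB l)) :
    ∃ (M : ℕ → Matrix (Fin d) (Fin d ⊕ Fin d) ℝ)
      (U : ℕ → Matrix (Fin d ⊕ Fin d) (Fin d) ℝ),
      U 0 = Matrix.fromRows (1 : Matrix (Fin d) (Fin d) ℝ) (1 : Matrix (Fin d) (Fin d) ℝ) ∧
      (∀ l, 1 ≤ l → l ≤ L →
        M l * Matrix.fromBlocks (WA l) 0 0 (WB l) * U (l - 1) = Wt l) ∧
      (∀ x : Fin d → ℝ,
        mlp (fun l => M l * Matrix.fromBlocks (WA l) 0 0 (WB l) * U (l - 1)) L x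
          = mlp Wt L x) := by
  classical
  refine ⟨fun l => if IsUnit (WA l) then Matrix.fromCols (Wt l * (WA l)⁻¹) 0
      else Matrix.fromCols 0 (Wt l * (WB l)⁻¹),
    fun _ => Matrix.fromRows 1 1, rfl, ?_, ?_⟩
  · intro l h1 h2
    have key : ∀ (C D : Matrix (Fin d) (Fin d) ℝ),
        Matrix.fromCols C D * Matrix.fromBlocks (WA l) 0 0 (WB l) *
          (Matrix.fromRows 1 1 : Matrix (Fin d ⊕ Fin d) (Fin d) ℝ) = C * WA l + D * WB l := by
      intro C D
      rw [Matrix.mul_assoc, Matrix.fromBlocks_mul_fromRows,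
        Matrix.fromCols_mul_fromRows]
      simp
    rcases hinv l h1 h2 with h | h
    · beta_reduce
      rw [if_pos h, key, Matrix.zero_mul, add_zero, Matrix.mul_assoc,
        Matrix.nonsing_inv_mul _ ((Matrix.isUnit_iff_isUnit_det _).mp h), Matrix.mul_one]
    · beta_reduce
      by_cases hA : IsUnit (WA l)
      · rw [if_pos hA, key, Matrix.zero_mul, add_zero, Matrix.mul_assoc,
          Matrix.nonsing_inv_mul _ ((Matrix.isUnit_iff_isUnit_det _).mp hA), Matrix.mul_one]
      · rw [if_neg hA, key, Matrix.zero_mul, zero_add, Matrix.mul_assoc,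
          Matrix.nonsing_inv_mul _ ((Matrix.isUnit_iff_isUnit_det _).mp h), Matrix.mul_one]
  · intro x
    apply mlp_congr
    intro l h1 h2
    have key : ∀ (C D : Matrix (Fin d) (Fin d) ℝ),
        Matrix.fromCols C D * Matrix.fromBlocks (WA l) 0 0 (WB l) *
          (Matrix.fromRows 1 1 : Matrix (Fin d ⊕ Fin d) (Fin d) ℝ) = C * WA l + D * WB l := by
      intro C D
      rw [Matrix.mul_assoc, Matrix.fromBlocks_mul_fromRows,
        Matrix.fromCols_mul_fromRows]
      simp
    rcases hinv l h1 h2 with h | h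
    · beta_reduce
      rw [if_pos h]
      rw [key, Matrix.zero_mul, add_zero, Matrix.mul_assoc,
        Matrix.nonsing_inv_mul _ ((Matrix.isUnit_iff_isUnit_det _).mp h), Matrix.mul_one]
    · by_cases hA : IsUnit (WA l)
      · beta_reduce
        rw [if_pos hA]
        rw [key, Matrix.zero_mul, add_zero, Matrix.mul_assoc,
          Matrix.nonsing_inv_mul _ ((Matrix.isUnit_iff_isUnit_det _).mp hA), Matrix.mul_one]
      · beta_reduce
        rw [if_neg hA]
        rw [key, Matrix.zero_mul, zero_add, Matrix.mul_assoc,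
          Matrix.nonsing_inv_mul _ ((Matrix.isUnit_iff_isUnit_det _).mp h), Matrix.mul_one]
end

section
/- Let W^A, W^B, W^* ∈ ℝ^{d×d} with W^A invertible, let r ≥ 0, and let F ∈ ℝ^{d×N} be a matrix with rank(F) ≤ r. Then there exist a matrix M ∈ ℝ^{d×2d} with rank(M) ≤ r and the matrix U = [I; I] ∈ ℝ^{2d×d} (the vertical stack of two d×d identity matrices) such that the folded weight acts on the features exactly as the target weight: (M · blockDiag(W^A, W^B) · U) · F = W^* · F. -/
theorem low_rank_fs_merge_matches_target_on_low_rank_features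
    (d N r : ℕ) (WA WB Wt : Matrix (Fin d) (Fin d) ℝ) (hA : IsUnit WA)
    (F : Matrix (Fin d) (Fin N) ℝ) (hF : F.rank ≤ r) :
    ∃ M : Matrix (Fin d) (Fin d ⊕ Fin d) ℝ,
      M.rank ≤ r ∧
      (M * Matrix.fromBlocks WA 0 0 WB *
          Matrix.fromRows (1 : Matrix (Fin d) (Fin d) ℝ) (1 : Matrix (Fin d) (Fin d) ℝ)) * F
        = Wt * F := by
  classical
  -- the column space of F
  set S : Submodule ℝ (Fin d → ℝ) := LinearMap.range F.mulVecLin with hS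
  obtain ⟨T, hT⟩ := Submodule.exists_isCompl S
  -- a projection onto S
  set p : (Fin d → ℝ) →ₗ[ℝ] (Fin d → ℝ) :=
    S.subtype ∘ₗ (Submodule.projectionOnto S T hT) with hp
  have hpS : ∀ x ∈ S, p x = x := by
    intro x hx
    simp [hp, Submodule.projectionOnto_apply_left hT ⟨x, hx⟩]
  set P : Matrix (Fin d) (Fin d) ℝ := LinearMap.toMatrix' p with hPdef
  -- P fixes F
  have hPF : P * F = F := by
    have hcomp : p ∘ₗ F.mulVecLin = F.mulVecLin := by
      refine LinearMap.ext fun x => hpS _ (LinearMap.mem_range_self _ _)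
    have h1 : LinearMap.toMatrix' (p ∘ₗ F.mulVecLin) = P * F := by
      rw [LinearMap.toMatrix'_comp]
      congr 1
      rw [← Matrix.toLin'_apply', LinearMap.toMatrix'_toLin']
    have h2 : LinearMap.toMatrix' F.mulVecLin = F := by
      rw [← Matrix.toLin'_apply', LinearMap.toMatrix'_toLin']
    rw [← h1, hcomp, h2]
  -- rank of P is at most r
  have hrankP : P.rank ≤ r := by
    have hrange : LinearMap.range P.mulVecLin ≤ S := by
      rw [hPdef, ← Matrix.toLin'_apply', Matrix.toLin'_toMatrix']
      rintro y ⟨x, rfl⟩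
      exact (Submodule.linearProjOfIsCompl S T hT x).2
    calc P.rank = Module.finrank ℝ (LinearMap.range P.mulVecLin) := rfl
      _ ≤ Module.finrank ℝ S := Submodule.finrank_mono hrange
      _ = F.rank := rfl
      _ ≤ r := hF
  set A : Matrix (Fin d) (Fin d) ℝ := Wt * P * WA⁻¹ with hAdef
  refine ⟨Matrix.fromCols A 0, ?_, ?_⟩
  · -- rank bound
    have h1 : Matrix.fromCols A (0 : Matrix (Fin d) (Fin d) ℝ)
        = A * Matrix.fromCols (1 : Matrix (Fin d) (Fin d) ℝ) 0 := by
      rw [Matrix.mul_fromCols, Matrix.mul_one, Matrix.mul_zero]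
    rw [h1]
    calc (A * Matrix.fromCols 1 0).rank ≤ A.rank := Matrix.rank_mul_le_left _ _
      _ = (Wt * (P * WA⁻¹)).rank := by rw [hAdef, Matrix.mul_assoc]
      _ ≤ (P * WA⁻¹).rank := Matrix.rank_mul_le_right _ _
      _ ≤ P.rank := Matrix.rank_mul_le_left _ _
      _ ≤ r := hrankP
  · -- the equality
    have hinv : WA⁻¹ * WA = 1 :=
      Matrix.nonsing_inv_mul WA ((Matrix.isUnit_iff_isUnit_det WA).mp hA)
    rw [Matrix.mul_assoc (Matrix.fromCols A 0), Matrix.fromBlocks_mul_fromRows]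
    simp only [Matrix.mul_one, Matrix.zero_mul, add_zero, zero_add]
    rw [Matrix.fromCols_mul_fromRows, Matrix.zero_mul, add_zero, hAdef,
      Matrix.mul_assoc (Wt * P), hinv, Matrix.mul_one, Matrix.mul_assoc, hPF]
end

section
/- Let W^A, W^B ∈ ℝ^{d×d} be arbitrary and let P, Q ∈ ℝ^{d×d} be permutation matrices. Setting M = [½I | ½P] ∈ ℝ^{d×2d} (horizontal concatenation) and U = [I; Qᵀ] ∈ ℝ^{2d×d} (vertical stack), the FS-Merge folded weight equals the Git Re-Basin merged weight: M · blockDiag(W^A, W^B) · U = ½W^A + ½ P W^B Qᵀ. Hence any merged layer produced by Git Re-Basin (permutation alignment followed by averaging) can also be produced by full-rank FS-Merge. -/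
open Matrix

/-- `P` is a permutation matrix: the matrix of some permutation of the indices
(equivalently, a 0/1 matrix with exactly one `1` in each row and each column). -/
def IsPermMatrix {d : ℕ} (P : Matrix (Fin d) (Fin d) ℝ) : Prop :=
  ∃ σ : Equiv.Perm (Fin d), P = σ.permMatrix ℝ

theorem fs_merge_realizes_git_re_basin
    (d : ℕ) (WA WB P Q : Matrix (Fin d) (Fin d) ℝ)
    (hP : IsPermMatrix P) (hQ : IsPermMatrix Q) :
    Matrix.fromCols ((1 / 2 : ℝ) • (1 : Matrix (Fin d) (Fin d) ℝ)) ((1 / 2 : ℝ) • P) *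
        Matrix.fromBlocks WA 0 0 WB *
        Matrix.fromRows (1 : Matrix (Fin d) (Fin d) ℝ) Qᵀ
      = (1 / 2 : ℝ) • WA + (1 / 2 : ℝ) • (P * WB * Qᵀ) := by
  rw [Matrix.mul_assoc, fromBlocks_mul_fromRows, fromCols_mul_fromRows]
  simp [Matrix.mul_assoc, smul_mul_assoc]
end

section
/- Let F_A, F_B ∈ ℝ^{d×N} and W^A, W^B ∈ ℝ^{d×d}, and suppose G := F_A F_Aᵀ + F_B F_Bᵀ is invertible. Setting M = [I | I] ∈ ℝ^{d×2d} and U ∈ ℝ^{2d×d} equal to the vertical stack of F_A F_Aᵀ G⁻¹ over F_B F_Bᵀ G⁻¹, the FS-Merge folded weight equals the RegMean merged weight: M · blockDiag(W^A, W^B) · U = (W^A F_A F_Aᵀ + W^B F_B F_Bᵀ) G⁻¹. Hence any merged layer produced by RegMean can also be produced by full-rank FS-Merge. -/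
open Matrix

theorem fs_merge_realizes_regmean
    (d N : ℕ) (FA FB : Matrix (Fin d) (Fin N) ℝ) (WA WB : Matrix (Fin d) (Fin d) ℝ)
    (hG : IsUnit (FA * FAᵀ + FB * FBᵀ)) :
    Matrix.fromCols (1 : Matrix (Fin d) (Fin d) ℝ) (1 : Matrix (Fin d) (Fin d) ℝ) *
        Matrix.fromBlocks WA 0 0 WB *
        Matrix.fromRows (FA * FAᵀ * (FA * FAᵀ + FB * FBᵀ)⁻¹)
          (FB * FBᵀ * (FA * FAᵀ + FB * FBᵀ)⁻¹)
      = (WA * (FA * FAᵀ) + WB * (FB * FBᵀ)) * (FA * FAᵀ + FB * FBᵀ)⁻¹ := by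
  rw [Matrix.mul_assoc, Matrix.fromBlocks_mul_fromRows, Matrix.fromCols_mul_fromRows]
  simp [Matrix.mul_assoc, Matrix.add_mul]
end

section
/- Let F_A, F_B ∈ ℝ^{d×N} and W^A, W^B ∈ ℝ^{d×d}, and suppose G := F_A F_Aᵀ + F_B F_Bᵀ is invertible. Then W_R := (W^A F_A F_Aᵀ + W^B F_B F_Bᵀ) G⁻¹ is the unique minimizer over W ∈ ℝ^{d×d} of the RegMean objective ‖W F_A − W^A F_A‖_F² + ‖W F_B − W^B F_B‖_F², where ‖·‖_F is the Frobenius norm. -/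
/-!
Expanding the squares, the objective at `W_R + D` is its value at `W_R`, plus
`‖D F_A‖² + ‖D F_B‖²`, plus twice the cross term `tr((R_A F_Aᵀ + R_B F_Bᵀ) Dᵀ)` in the residuals
`R_X = W_R F_X - W^X F_X`. The definition of `W_R` is the normal equation
`R_A F_Aᵀ + R_B F_Bᵀ = W_R G - (W^A F_A F_Aᵀ + W^B F_B F_Bᵀ) = 0`, so the cross term vanishes.
The excess vanishes only if `D F_A = D F_B = 0`, i.e. `D G = 0`, i.e. `D = 0` as `G` is invertible.
-/

open Matrix

/-- Squared Frobenius norm of a real matrix. -/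
def frobSq {m n : Type*} [Fintype m] [Fintype n] (A : Matrix m n ℝ) : ℝ :=
  ∑ i, ∑ j, (A i j) ^ 2

section Frobenius

variable {m n : Type*} [Fintype m] [Fintype n]

lemma frobSq_nonneg (A : Matrix m n ℝ) : 0 ≤ frobSq A := by
  unfold frobSq
  positivity

lemma frobSq_eq_trace_mul_transpose (A : Matrix m n ℝ) : frobSq A = trace (A * Aᵀ) := by
  simp [frobSq, trace, mul_apply, sq]

lemma frobSq_eq_zero_iff {A : Matrix m n ℝ} : frobSq A = 0 ↔ A = 0 := by
  rw [frobSq_eq_trace_mul_transpose, ← conjTranspose_eq_transpose_of_trivial,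
    trace_mul_conjTranspose_self_eq_zero_iff]

lemma frobSq_add (X Y : Matrix m n ℝ) :
    frobSq (X + Y) = frobSq X + 2 * trace (X * Yᵀ) + frobSq Y := by
  have hYX : trace (Y * Xᵀ) = trace (X * Yᵀ) := by
    rw [← trace_transpose, transpose_mul, transpose_transpose]
  simp only [frobSq_eq_trace_mul_transpose, transpose_add, Matrix.add_mul, Matrix.mul_add,
    trace_add, hYX]
  ring

end Frobenius

section RegMean

variable {m n k l : Type*} [Fintype n] [Fintype k] [Fintype l]
  (FA : Matrix n k ℝ) (FB : Matrix n l ℝ) (WA WB : Matrix m n ℝ)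

lemma residual_mul_transpose_add (W : Matrix m n ℝ) :
    (W * FA - WA * FA) * FAᵀ + (W * FB - WB * FB) * FBᵀ
      = W * (FA * FAᵀ + FB * FBᵀ) - (WA * (FA * FAᵀ) + WB * (FB * FBᵀ)) := by
  simp only [Matrix.sub_mul, Matrix.mul_add, Matrix.mul_assoc]
  abel

variable [Fintype m]

def regmeanLoss (W : Matrix m n ℝ) : ℝ :=
  frobSq (W * FA - WA * FA) + frobSq (W * FB - WB * FB)

lemma regmeanLoss_add_of_mul_gram_eq {W₀ : Matrix m n ℝ}
    (hW₀ : W₀ * (FA * FAᵀ + FB * FBᵀ) = WA * (FA * FAᵀ) + WB * (FB * FBᵀ))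
    (D : Matrix m n ℝ) :
    regmeanLoss FA FB WA WB (W₀ + D)
      = regmeanLoss FA FB WA WB W₀ + (frobSq (D * FA) + frobSq (D * FB)) := by
  have hcross : trace ((W₀ * FA - WA * FA) * (D * FA)ᵀ)
      + trace ((W₀ * FB - WB * FB) * (D * FB)ᵀ) = 0 := by
    rw [transpose_mul, transpose_mul, ← Matrix.mul_assoc, ← Matrix.mul_assoc, ← trace_add,
      ← Matrix.add_mul, residual_mul_transpose_add, hW₀, sub_self, Matrix.zero_mul, trace_zero]
  rw [regmeanLoss, regmeanLoss, Matrix.add_mul, Matrix.add_mul, add_sub_right_comm,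
    add_sub_right_comm, frobSq_add, frobSq_add]
  linarith

lemma frobSq_mul_add_frobSq_mul_pos [DecidableEq n] (hG : IsUnit (FA * FAᵀ + FB * FBᵀ).det)
    {D : Matrix m n ℝ} (hD : D ≠ 0) : 0 < frobSq (D * FA) + frobSq (D * FB) := by
  refine lt_of_le_of_ne (add_nonneg (frobSq_nonneg _) (frobSq_nonneg _)) fun h => hD ?_
  obtain ⟨hA, hB⟩ := (add_eq_zero_iff_of_nonneg (frobSq_nonneg _) (frobSq_nonneg _)).mp h.symm
  rw [frobSq_eq_zero_iff] at hA hB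
  rw [← mul_nonsing_inv_cancel_right _ D hG, Matrix.mul_add, ← Matrix.mul_assoc,
    ← Matrix.mul_assoc, hA, hB, Matrix.zero_mul, Matrix.zero_mul, add_zero, Matrix.zero_mul]

end RegMean

/-- The RegMean closed-form solution is the unique minimizer of the RegMean objective. -/
theorem regmean_unique_minimizer
    (d N : ℕ) (FA FB : Matrix (Fin d) (Fin N) ℝ) (WA WB : Matrix (Fin d) (Fin d) ℝ)
    (hG : IsUnit (FA * FAᵀ + FB * FBᵀ)) :
    let G := FA * FAᵀ + FB * FBᵀ
    let WR := (WA * (FA * FAᵀ) + WB * (FB * FBᵀ)) * G⁻¹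
    ∀ W : Matrix (Fin d) (Fin d) ℝ, W ≠ WR →
      frobSq (WR * FA - WA * FA) + frobSq (WR * FB - WB * FB)
        < frobSq (W * FA - WA * FA) + frobSq (W * FB - WB * FB) := by
  intro G WR W hW
  have hdet : IsUnit G.det := (isUnit_iff_isUnit_det G).mp hG
  have hWR : WR * G = WA * (FA * FAᵀ) + WB * (FB * FBᵀ) := nonsing_inv_mul_cancel_right _ _ hdet
  have hloss := regmeanLoss_add_of_mul_gram_eq FA FB WA WB hWR (W - WR)
  rw [add_sub_cancel] at hloss
  have hpos := frobSq_mul_add_frobSq_mul_pos FA FB hdet (sub_ne_zero_of_ne hW)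
  unfold regmeanLoss at hloss
  linarith
end

section
/- Let F ∈ ℝ^{d×N} with rank(F) ≤ r and let P ∈ ℝ^{d×d} be a permutation matrix. Then there exist matrices C, C' ∈ ℝ^{d×d} with rank(C) ≤ r and rank(C') ≤ r such that C' P C F = P F. Moreover, the matrix [½I | ½ C' P C] ∈ ℝ^{d×2d} can be written as a horizontal concatenation of two d×d diagonal matrices plus a matrix of rank at most r, and the matrix [I ; (C' P C)ᵀ] ∈ ℝ^{2d×d} can be written as a vertical concatenation of two d×d diagonal matrices plus a matrix of rank at most r; hence the Git Re-Basin merge can be realized on rank-r features by low-rank FS-Merge with rank r. -/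
open Matrix

/-- A projection matrix onto the column space of `F`: it fixes `F` and has rank `F.rank`. -/
lemma exists_proj_matrix {d N : ℕ} (F : Matrix (Fin d) (Fin N) ℝ) :
    ∃ C : Matrix (Fin d) (Fin d) ℝ, C.rank = F.rank ∧ C * F = F := by
  set W : Submodule ℝ (Fin d → ℝ) := LinearMap.range F.mulVecLin with hW
  obtain ⟨W', hcompl⟩ := Submodule.exists_isCompl W
  set p : (Fin d → ℝ) →ₗ[ℝ] (Fin d → ℝ) :=
    W.subtype ∘ₗ W.projectionOnto W' hcompl with hp
  have hC : Matrix.toLin' (LinearMap.toMatrix' p) = p := Matrix.toLin'_toMatrix' p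
  refine ⟨LinearMap.toMatrix' p, ?_, ?_⟩
  · have hrange : LinearMap.range p = W := by
      rw [hp, LinearMap.range_comp, Submodule.range_projectionOnto,
        Submodule.map_top, Submodule.range_subtype]
    rw [Matrix.rank, ← Matrix.toLin'_apply', hC, hrange, Matrix.rank]
  · apply Matrix.toLin'.injective
    rw [Matrix.toLin'_mul, hC]
    refine LinearMap.ext fun x => ?_
    have hx : F.mulVec x ∈ W := ⟨x, rfl⟩
    have h1 : p (F.mulVec x) = F.mulVec x := by
      simpa [hp] using congrArg Subtype.val
        (Submodule.projectionOnto_apply_left hcompl ⟨F.mulVec x, hx⟩)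
    simp [LinearMap.comp_apply, Matrix.toLin'_apply, h1]

theorem low_rank_fs_merge_realizes_git_re_basin_on_low_rank_features
    (d N r : ℕ) (F : Matrix (Fin d) (Fin N) ℝ) (hF : F.rank ≤ r)
    (P : Matrix (Fin d) (Fin d) ℝ) (hP : IsPermMatrix P) :
    ∃ C C' : Matrix (Fin d) (Fin d) ℝ,
      C.rank ≤ r ∧ C'.rank ≤ r ∧
      C' * P * C * F = P * F ∧
      (∃ (D₁ D₂ : Matrix (Fin d) (Fin d) ℝ) (R : Matrix (Fin d) (Fin d ⊕ Fin d) ℝ),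
        D₁.IsDiag ∧ D₂.IsDiag ∧ R.rank ≤ r ∧
        Matrix.fromCols ((1 / 2 : ℝ) • (1 : Matrix (Fin d) (Fin d) ℝ))
            ((1 / 2 : ℝ) • (C' * P * C))
          = Matrix.fromCols D₁ D₂ + R) ∧
      (∃ (D₁ D₂ : Matrix (Fin d) (Fin d) ℝ) (R : Matrix (Fin d ⊕ Fin d) (Fin d) ℝ),
        D₁.IsDiag ∧ D₂.IsDiag ∧ R.rank ≤ r ∧
        Matrix.fromRows (1 : Matrix (Fin d) (Fin d) ℝ) (C' * P * C)ᵀ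
          = Matrix.fromRows D₁ D₂ + R) := by
  obtain ⟨σ, rfl⟩ := hP
  obtain ⟨C, hCrank, hCF⟩ := exists_proj_matrix F
  set P : Matrix (Fin d) (Fin d) ℝ := σ.permMatrix ℝ with hPdef
  have hPPt : P * Pᵀ = 1 := by
    rw [hPdef, Equiv.Perm.permMatrix, ← PEquiv.toMatrix_symm, ← PEquiv.toMatrix_trans,
      ← Equiv.toPEquiv_symm, ← Equiv.toPEquiv_trans]
    simp [Equiv.toPEquiv_refl, PEquiv.toMatrix_refl]
  have hPtP : Pᵀ * P = 1 := by
    rw [hPdef, Equiv.Perm.permMatrix, ← PEquiv.toMatrix_symm, ← PEquiv.toMatrix_trans,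
      ← Equiv.toPEquiv_symm, ← Equiv.toPEquiv_trans]
    simp [Equiv.toPEquiv_refl, PEquiv.toMatrix_refl]
  refine ⟨C, P * C * Pᵀ, hCrank.le.trans hF, ?_, ?_, ?_, ?_⟩
  · calc (P * C * Pᵀ).rank ≤ (P * C).rank := Matrix.rank_mul_le_left _ _
      _ ≤ C.rank := Matrix.rank_mul_le_right _ _
      _ ≤ r := hCrank.le.trans hF
  · simp only [Matrix.mul_assoc]
    rw [hCF, ← Matrix.mul_assoc Pᵀ P F, hPtP, Matrix.one_mul, hCF]
  · refine ⟨(1 / 2 : ℝ) • (1 : Matrix (Fin d) (Fin d) ℝ), 0,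
      Matrix.fromCols 0 ((1 / 2 : ℝ) • (P * C * Pᵀ * P * C)), ?_, ?_, ?_, ?_⟩
    · exact Matrix.IsDiag.smul _ Matrix.isDiag_one
    · exact Matrix.isDiag_zero
    · have : Matrix.fromCols (0 : Matrix (Fin d) (Fin d) ℝ)
          ((1 / 2 : ℝ) • (P * C * Pᵀ * P * C))
          = ((1 / 2 : ℝ) • (P * C * Pᵀ * P * C)) * Matrix.fromCols (0 : Matrix (Fin d) (Fin d) ℝ) (1 : Matrix (Fin d) (Fin d) ℝ) := by
        rw [Matrix.mul_fromCols, Matrix.mul_zero, Matrix.mul_one]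
      rw [this]
      refine le_trans (Matrix.rank_mul_le_left _ _) ?_
      have hs : (1 / 2 : ℝ) • (P * C * Pᵀ * P * C)
          = ((1 / 2 : ℝ) • (1 : Matrix (Fin d) (Fin d) ℝ)) * (P * C * Pᵀ * P * C) := by
        rw [Matrix.smul_mul, Matrix.one_mul]
      calc ((1 / 2 : ℝ) • (P * C * Pᵀ * P * C)).rank
          ≤ (P * C * Pᵀ * P * C).rank := by
            rw [hs]; exact Matrix.rank_mul_le_right _ _
        _ ≤ C.rank := Matrix.rank_mul_le_right _ _
        _ ≤ r := hCrank.le.trans hF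
    · ext i (j | j) <;> simp
  · refine ⟨(1 : Matrix (Fin d) (Fin d) ℝ), 0,
      Matrix.fromRows 0 (P * C * Pᵀ * P * C)ᵀ, ?_, ?_, ?_, ?_⟩
    · exact Matrix.isDiag_one
    · exact Matrix.isDiag_zero
    · have : Matrix.fromRows (0 : Matrix (Fin d) (Fin d) ℝ) (P * C * Pᵀ * P * C)ᵀ
          = Matrix.fromRows (0 : Matrix (Fin d) (Fin d) ℝ) (1 : Matrix (Fin d) (Fin d) ℝ) * (P * C * Pᵀ * P * C)ᵀ := by
        rw [Matrix.fromRows_mul, Matrix.zero_mul, Matrix.one_mul]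
      rw [this]
      refine le_trans (Matrix.rank_mul_le_right _ _) ?_
      rw [Matrix.rank_transpose]
      calc (P * C * Pᵀ * P * C).rank
          ≤ C.rank := Matrix.rank_mul_le_right _ _
        _ ≤ r := hCrank.le.trans hF
    · ext (i | i) j <;> simp
end

section
/- Let F_A, F_B ∈ ℝ^{d×N} with rank(F_A) ≤ r and rank(F_B) ≤ r, let W^A, W^B ∈ ℝ^{d×d}, and suppose G := F_A F_Aᵀ + F_B F_Bᵀ is invertible. Then the RegMean merged weight W_R := (W^A F_A F_Aᵀ + W^B F_B F_Bᵀ) G⁻¹ can be realized by low-rank FS-Merge with rank 2r: taking M = [I | I] ∈ ℝ^{d×2d} (a horizontal concatenation of two diagonal matrices) and U ∈ ℝ^{2d×d} equal to the vertical stack of F_A F_Aᵀ G⁻¹ over F_B F_Bᵀ G⁻¹, one has M · blockDiag(W^A, W^B) · U = W_R and rank(U) ≤ 2r. -/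
open Matrix

lemma matrix_rank_add_le {m n : Type*} [Fintype m] [Fintype n] [DecidableEq n]
    (A B : Matrix m n ℝ) : (A + B).rank ≤ A.rank + B.rank := by
  unfold Matrix.rank
  rw [Matrix.mulVecLin_add]
  refine le_trans (Submodule.finrank_mono ?_) (Submodule.finrank_add_le_finrank_add_finrank _ _)
  rintro x ⟨v, rfl⟩
  exact Submodule.add_mem_sup ⟨v, rfl⟩ ⟨v, rfl⟩

theorem low_rank_fs_merge_realizes_regmean
    (d N r : ℕ) (FA FB : Matrix (Fin d) (Fin N) ℝ)
    (hFA : FA.rank ≤ r) (hFB : FB.rank ≤ r)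
    (WA WB : Matrix (Fin d) (Fin d) ℝ)
    (hG : IsUnit (FA * FAᵀ + FB * FBᵀ)) :
    let G := FA * FAᵀ + FB * FBᵀ
    let U := Matrix.fromRows (FA * FAᵀ * G⁻¹) (FB * FBᵀ * G⁻¹)
    Matrix.fromCols (1 : Matrix (Fin d) (Fin d) ℝ) (1 : Matrix (Fin d) (Fin d) ℝ) *
        Matrix.fromBlocks WA 0 0 WB * U
      = (WA * (FA * FAᵀ) + WB * (FB * FBᵀ)) * G⁻¹ ∧
    U.rank ≤ 2 * r := by
  intro G U
  constructor
  · rw [Matrix.fromCols_mul_fromBlocks]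
    show Matrix.fromCols (1 * WA + 1 * 0) (1 * 0 + 1 * WB) * U = _
    rw [Matrix.fromCols_mul_fromRows]
    simp [mul_assoc, add_mul]
  · have hX : Matrix.fromRows (FA * FAᵀ * G⁻¹) (0 : Matrix (Fin d) (Fin d) ℝ)
        = Matrix.fromRows (1 : Matrix (Fin d) (Fin d) ℝ) (0 : Matrix (Fin d) (Fin d) ℝ) * (FA * FAᵀ * G⁻¹) := by
      rw [Matrix.fromRows_mul]; simp
    have hY : Matrix.fromRows (0 : Matrix (Fin d) (Fin d) ℝ) (FB * FBᵀ * G⁻¹)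
        = Matrix.fromRows (0 : Matrix (Fin d) (Fin d) ℝ) (1 : Matrix (Fin d) (Fin d) ℝ) * (FB * FBᵀ * G⁻¹) := by
      rw [Matrix.fromRows_mul]; simp
    have hU : U = Matrix.fromRows (FA * FAᵀ * G⁻¹) (0 : Matrix (Fin d) (Fin d) ℝ) + Matrix.fromRows (0 : Matrix (Fin d) (Fin d) ℝ) (FB * FBᵀ * G⁻¹) := by
      ext (i | i) j <;> simp [U]
    calc U.rank ≤ (Matrix.fromRows (FA * FAᵀ * G⁻¹) (0 : Matrix (Fin d) (Fin d) ℝ)).rank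
          + (Matrix.fromRows (0 : Matrix (Fin d) (Fin d) ℝ) (FB * FBᵀ * G⁻¹)).rank := hU ▸ matrix_rank_add_le _ _
      _ ≤ (FA * FAᵀ * G⁻¹).rank + (FB * FBᵀ * G⁻¹).rank := by
          refine add_le_add ?_ ?_
          · rw [hX]; exact Matrix.rank_mul_le_right _ _
          · rw [hY]; exact Matrix.rank_mul_le_right _ _
      _ ≤ FA.rank + FB.rank := by
          refine add_le_add ?_ ?_
          · exact le_trans (Matrix.rank_mul_le_left _ _)
              (le_trans (Matrix.rank_mul_le_left _ _) le_rfl)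
          · exact le_trans (Matrix.rank_mul_le_left _ _)
              (le_trans (Matrix.rank_mul_le_left _ _) le_rfl)
      _ ≤ 2 * r := by omega
end

section
/- Let W^* ∈ ℝ^{d×d}, let D^A, D^B ∈ ℝ^{d×d} be diagonal matrices with strictly positive diagonal entries, P^A, P^B ∈ ℝ^{d×d} permutation matrices, and V^A, V^B ∈ ℝ^{d×d} diagonal 0/1 matrices with disjoint supports (V^A V^B = 0) and rank(V^A) + rank(V^B) = r. For an input X ∈ ℝ^{d×N} set z^A = D^A P^A V^A W^* X, z^B = D^B P^B V^B W^* X, f^A = σ(z^A), f^B = σ(z^B). Define M = [V^A (P^A)ᵀ (D^A)⁻¹ | V^B (P^B)ᵀ (D^B)⁻¹] ∈ ℝ^{d×2d} and U ∈ ℝ^{2d×d} equal to the vertical stack of D^A P^A V^A over D^B P^B V^B. Then rank(M) ≤ r, rank(U) ≤ r, and the Foldable SuperNet perfectly reconstructs both models' features: U · σ(M · [z^A; z^B]) = [f^A; f^B] (the vertical concatenation of f^A and f^B), i.e., the feature-reconstruction loss is exactly zero. -/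
open Matrix

/-- Entrywise ReLU on matrices. -/
def relu {m n : Type*} (Z : Matrix m n ℝ) : Matrix m n ℝ :=
  Matrix.of fun i j => max (Z i j) 0

lemma perm_mul_apply {d n : ℕ} (σ : Equiv.Perm (Fin d)) (M : Matrix (Fin d) (Fin n) ℝ)
    (i : Fin d) (j : Fin n) : (σ.permMatrix ℝ * M) i j = M (σ i) j := by
  rw [PEquiv.toMatrix_toPEquiv_mul]; rfl

lemma perm_transpose_mul {d : ℕ} (σ : Equiv.Perm (Fin d)) :
    (σ.permMatrix ℝ)ᵀ * σ.permMatrix ℝ = 1 := by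
  have h : (σ.permMatrix ℝ)ᵀ = ((σ⁻¹).permMatrix ℝ) := by
    rw [← PEquiv.toMatrix_symm, ← Equiv.toPEquiv_symm]; rfl
  rw [h]
  ext i j
  rw [perm_mul_apply]
  simp [PEquiv.toMatrix_apply, Equiv.toPEquiv_apply, Matrix.one_apply]

lemma key_relu {d n : ℕ} (dd v : Fin d → ℝ) (hd : ∀ i, 0 ≤ dd i) (hv : ∀ i, 0 ≤ v i)
    (σ : Equiv.Perm (Fin d)) (Y : Matrix (Fin d) (Fin n) ℝ) :
    diagonal dd * (σ.permMatrix ℝ * (diagonal v * relu Y)) =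
      relu (diagonal dd * (σ.permMatrix ℝ * (diagonal v * Y))) := by
  ext i j
  simp only [relu, Matrix.of_apply, Matrix.diagonal_mul, perm_mul_apply]
  rw [mul_max_of_nonneg _ _ (hv (σ i)), mul_max_of_nonneg _ _ (hd i)]
  simp

theorem case_study_low_rank_supernet_perfect_feature_reconstruction
    (d N r : ℕ) (Wstar : Matrix (Fin d) (Fin d) ℝ)
    (DA DB PA PB VA VB : Matrix (Fin d) (Fin d) ℝ)
    (hDA : DA.IsDiag) (hDApos : ∀ i, 0 < DA i i)
    (hDB : DB.IsDiag) (hDBpos : ∀ i, 0 < DB i i)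
    (hPA : IsPermMatrix PA) (hPB : IsPermMatrix PB)
    (hVA : VA.IsDiag) (hVA01 : ∀ i, VA i i = 0 ∨ VA i i = 1)
    (hVB : VB.IsDiag) (hVB01 : ∀ i, VB i i = 0 ∨ VB i i = 1)
    (hdisj : VA * VB = 0) (hr : VA.rank + VB.rank = r)
    (X : Matrix (Fin d) (Fin N) ℝ) :
    let zA := DA * PA * VA * Wstar * X
    let zB := DB * PB * VB * Wstar * X
    let fA := relu zA
    let fB := relu zB
    let M := Matrix.fromCols (VA * PAᵀ * DA⁻¹) (VB * PBᵀ * DB⁻¹)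
    let U := Matrix.fromRows (DA * PA * VA) (DB * PB * VB)
    M.rank ≤ r ∧ U.rank ≤ r ∧
    U * relu (M * Matrix.fromRows zA zB) = Matrix.fromRows fA fB := by
  obtain ⟨σA, rfl⟩ := hPA
  obtain ⟨σB, rfl⟩ := hPB
  obtain ⟨dA, rfl⟩ : ∃ v, DA = diagonal v := ⟨DA.diag, hDA.diagonal_diag.symm⟩
  obtain ⟨dB, rfl⟩ : ∃ v, DB = diagonal v := ⟨DB.diag, hDB.diagonal_diag.symm⟩
  obtain ⟨vA, rfl⟩ : ∃ v, VA = diagonal v := ⟨VA.diag, hVA.diagonal_diag.symm⟩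
  obtain ⟨vB, rfl⟩ : ∃ v, VB = diagonal v := ⟨VB.diag, hVB.diagonal_diag.symm⟩
  simp only [Matrix.diagonal_apply_eq] at hDApos hDBpos hVA01 hVB01
  intro zA zB fA fB M U
  simp only [zA, zB, fA, fB, M, U]
  -- basic facts
  have hvA0 : ∀ i, 0 ≤ vA i := fun i => by rcases hVA01 i with h | h <;> simp [h]
  have hvB0 : ∀ i, 0 ≤ vB i := fun i => by rcases hVB01 i with h | h <;> simp [h]
  have hdA0 : ∀ i, 0 ≤ dA i := fun i => (hDApos i).le
  have hdB0 : ∀ i, 0 ≤ dB i := fun i => (hDBpos i).le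
  have hdisj' : ∀ i, vA i * vB i = 0 := by
    intro i
    have h := congrFun (congrFun hdisj i) i
    rw [Matrix.diagonal_mul_diagonal] at h
    simpa using h
  have hdisj'' : ∀ i, vB i * vA i = 0 := fun i => by rw [mul_comm]; exact hdisj' i
  have hAA : ∀ i, vA i * vA i = vA i := fun i => by rcases hVA01 i with h | h <;> simp [h]
  have hBB : ∀ i, vB i * vB i = vB i := fun i => by rcases hVB01 i with h | h <;> simp [h]
  -- E = VA + VB absorbs each factor
  set E : Matrix (Fin d) (Fin d) ℝ := diagonal (fun i => vA i + vB i) with hE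
  have hEA : E * diagonal vA = diagonal vA := by
    rw [hE, Matrix.diagonal_mul_diagonal]
    simp only [add_mul, hAA, hdisj'', add_zero]
  have hEB : E * diagonal vB = diagonal vB := by
    rw [hE, Matrix.diagonal_mul_diagonal]
    simp only [add_mul, hBB, hdisj', zero_add]
  have hAE : diagonal vA * E = diagonal vA := by
    rw [hE, Matrix.diagonal_mul_diagonal]
    simp only [mul_add, hAA, hdisj', add_zero]
  have hBE : diagonal vB * E = diagonal vB := by
    rw [hE, Matrix.diagonal_mul_diagonal]
    simp only [mul_add, hBB, hdisj'', zero_add]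
  -- rank of E
  have hrankE : E.rank ≤ r := by
    rw [hE, Matrix.rank_diagonal]
    rw [← hr, Matrix.rank_diagonal, Matrix.rank_diagonal]
    classical
    rw [Fintype.card_subtype, Fintype.card_subtype, Fintype.card_subtype]
    calc (Finset.filter (fun i => vA i + vB i ≠ 0) Finset.univ).card
        ≤ ((Finset.filter (fun i => vA i ≠ 0) Finset.univ) ∪
            (Finset.filter (fun i => vB i ≠ 0) Finset.univ)).card := by
          apply Finset.card_le_card
          intro i hi
          simp only [Finset.mem_filter, Finset.mem_union, Finset.mem_univ, true_and] at *
          by_contra hc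
          push_neg at hc
          simp [hc.1, hc.2] at hi
      _ ≤ _ := Finset.card_union_le _ _
  -- rank bounds
  have hEC1 : E * (diagonal vA * (σA.permMatrix ℝ)ᵀ * (diagonal dA)⁻¹) =
      diagonal vA * (σA.permMatrix ℝ)ᵀ * (diagonal dA)⁻¹ := by
    rw [← Matrix.mul_assoc, ← Matrix.mul_assoc, hEA]
  have hEC2 : E * (diagonal vB * (σB.permMatrix ℝ)ᵀ * (diagonal dB)⁻¹) =
      diagonal vB * (σB.permMatrix ℝ)ᵀ * (diagonal dB)⁻¹ := by
    rw [← Matrix.mul_assoc, ← Matrix.mul_assoc, hEB]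
  have hR1E : diagonal dA * σA.permMatrix ℝ * diagonal vA * E =
      diagonal dA * σA.permMatrix ℝ * diagonal vA := by
    rw [Matrix.mul_assoc (diagonal dA * σA.permMatrix ℝ) (diagonal vA) E, hAE]
  have hR2E : diagonal dB * σB.permMatrix ℝ * diagonal vB * E =
      diagonal dB * σB.permMatrix ℝ * diagonal vB := by
    rw [Matrix.mul_assoc (diagonal dB * σB.permMatrix ℝ) (diagonal vB) E, hBE]
  have hM : Matrix.fromCols (diagonal vA * (σA.permMatrix ℝ)ᵀ * (diagonal dA)⁻¹)
      (diagonal vB * (σB.permMatrix ℝ)ᵀ * (diagonal dB)⁻¹) =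
      E * Matrix.fromCols (diagonal vA * (σA.permMatrix ℝ)ᵀ * (diagonal dA)⁻¹)
      (diagonal vB * (σB.permMatrix ℝ)ᵀ * (diagonal dB)⁻¹) := by
    rw [Matrix.mul_fromCols, hEC1, hEC2]
  have hU : Matrix.fromRows (diagonal dA * σA.permMatrix ℝ * diagonal vA)
      (diagonal dB * σB.permMatrix ℝ * diagonal vB) =
      Matrix.fromRows (diagonal dA * σA.permMatrix ℝ * diagonal vA)
      (diagonal dB * σB.permMatrix ℝ * diagonal vB) * E := by
    rw [Matrix.fromRows_mul, hR1E, hR2E]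
  have h1 : (Matrix.fromCols (diagonal vA * (σA.permMatrix ℝ)ᵀ * (diagonal dA)⁻¹)
      (diagonal vB * (σB.permMatrix ℝ)ᵀ * (diagonal dB)⁻¹)).rank ≤ r := by
    rw [hM]
    exact le_trans (Matrix.rank_mul_le_left _ _) hrankE
  have h2 : (Matrix.fromRows (diagonal dA * σA.permMatrix ℝ * diagonal vA)
      (diagonal dB * σB.permMatrix ℝ * diagonal vB)).rank ≤ r := by
    rw [hU]
    exact le_trans (Matrix.rank_mul_le_right _ _) hrankE
  -- main equation
  have hDAdet : IsUnit (diagonal dA).det := by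
    rw [Matrix.det_diagonal]
    exact (Finset.prod_pos (fun i _ => hDApos i)).ne'.isUnit
  have hDBdet : IsUnit (diagonal dB).det := by
    rw [Matrix.det_diagonal]
    exact (Finset.prod_pos (fun i _ => hDBpos i)).ne'.isUnit
  have cancelA : ∀ Z : Matrix (Fin d) (Fin N) ℝ, (diagonal dA)⁻¹ * ((diagonal dA) * Z) = Z :=
    fun Z => by rw [← Matrix.mul_assoc, Matrix.nonsing_inv_mul _ hDAdet, Matrix.one_mul]
  have cancelB : ∀ Z : Matrix (Fin d) (Fin N) ℝ, (diagonal dB)⁻¹ * ((diagonal dB) * Z) = Z :=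
    fun Z => by rw [← Matrix.mul_assoc, Matrix.nonsing_inv_mul _ hDBdet, Matrix.one_mul]
  have cancelPA : ∀ Z : Matrix (Fin d) (Fin N) ℝ,
      (σA.permMatrix ℝ)ᵀ * (σA.permMatrix ℝ * Z) = Z :=
    fun Z => by rw [← Matrix.mul_assoc, perm_transpose_mul, Matrix.one_mul]
  have cancelPB : ∀ Z : Matrix (Fin d) (Fin N) ℝ,
      (σB.permMatrix ℝ)ᵀ * (σB.permMatrix ℝ * Z) = Z :=
    fun Z => by rw [← Matrix.mul_assoc, perm_transpose_mul, Matrix.one_mul]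
  have cancelVA : ∀ Z : Matrix (Fin d) (Fin N) ℝ,
      diagonal vA * (diagonal vA * Z) = diagonal vA * Z := fun Z => by
    rw [← Matrix.mul_assoc, Matrix.diagonal_mul_diagonal]
    simp only [hAA]
  have cancelVB : ∀ Z : Matrix (Fin d) (Fin N) ℝ,
      diagonal vB * (diagonal vB * Z) = diagonal vB * Z := fun Z => by
    rw [← Matrix.mul_assoc, Matrix.diagonal_mul_diagonal]
    simp only [hBB]
  have hzero : ∀ Z : Matrix (Fin d) (Fin N) ℝ,
      diagonal vA * (diagonal vB * Z) = 0 := fun Z => by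
    rw [← Matrix.mul_assoc, Matrix.diagonal_mul_diagonal]
    simp only [hdisj']
    simp
  have hzero' : ∀ Z : Matrix (Fin d) (Fin N) ℝ,
      diagonal vB * (diagonal vA * Z) = 0 := fun Z => by
    rw [← Matrix.mul_assoc, Matrix.diagonal_mul_diagonal]
    simp only [hdisj'']
    simp
  have hMz : Matrix.fromCols (diagonal vA * (σA.permMatrix ℝ)ᵀ * (diagonal dA)⁻¹)
      (diagonal vB * (σB.permMatrix ℝ)ᵀ * (diagonal dB)⁻¹) *
      Matrix.fromRows (diagonal dA * σA.permMatrix ℝ * diagonal vA * Wstar * X)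
        (diagonal dB * σB.permMatrix ℝ * diagonal vB * Wstar * X) =
      diagonal vA * (Wstar * X) + diagonal vB * (Wstar * X) := by
    rw [Matrix.fromCols_mul_fromRows]
    congr 1
    · simp only [Matrix.mul_assoc]
      rw [cancelA, cancelPA, cancelVA]
    · simp only [Matrix.mul_assoc]
      rw [cancelB, cancelPB, cancelVB]
  have hSA : diagonal vA * (diagonal vA * (Wstar * X) + diagonal vB * (Wstar * X)) =
      diagonal vA * (Wstar * X) := by
    rw [Matrix.mul_add, cancelVA, hzero, add_zero]
  have hSB : diagonal vB * (diagonal vA * (Wstar * X) + diagonal vB * (Wstar * X)) =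
      diagonal vB * (Wstar * X) := by
    rw [Matrix.mul_add, hzero', cancelVB, zero_add]
  have e1 : diagonal dA * Equiv.Perm.permMatrix ℝ σA * diagonal vA *
      relu (diagonal vA * (Wstar * X) + diagonal vB * (Wstar * X)) =
      relu (diagonal dA * Equiv.Perm.permMatrix ℝ σA * diagonal vA * Wstar * X) := by
    simp only [Matrix.mul_assoc]
    rw [key_relu dA vA hdA0 hvA0, hSA]
  have e2 : diagonal dB * Equiv.Perm.permMatrix ℝ σB * diagonal vB *
      relu (diagonal vA * (Wstar * X) + diagonal vB * (Wstar * X)) =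
      relu (diagonal dB * Equiv.Perm.permMatrix ℝ σB * diagonal vB * Wstar * X) := by
    simp only [Matrix.mul_assoc]
    rw [key_relu dB vB hdB0 hvB0, hSB]
  exact ⟨h1, h2, by rw [hMz, Matrix.fromRows_mul, e1, e2]⟩
end
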